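/- Let d ≥ 1 and t > 0. For each N ≥ 1, let u*_N = (u*_{N,1}, …, u*_{N,N}) ∈ (S^d)^N be a configuration minimizing Σ_{1 ≤ i < j ≤ N} G_t(u_i, u_j) over all N-point configurations (u_1, …, u_N) ∈ (S^d)^N. Then the normalized counting measures μ_N = (1/N) Σ_{i=1}^N δ_{u*_{N,i}} converge weak* to σ_d as N → ∞, i.e., for every continuous function h : S^d → ℝ, ∫ h dμ_N → ∫ h dσ_d. -/

import Mathlib

open MeasureTheory Real Filter Metric
open scoped RealInnerProductSpace ENNReal Topology BigOperators

noncomputable section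

/-- `ℝ^n` as a Euclidean space. -/
abbrev Euc (n : ℕ) : Type := EuclideanSpace ℝ (Fin n)

/-- The unit sphere in `ℝ^m`; the sphere `S^d` of the informal statement is `Sph (d+1)`. -/
abbrev Sph (m : ℕ) := Metric.sphere (0 : Euc m) 1

/-- The uniform (normalized surface-area) probability measure on the unit sphere of `ℝ^m`. -/
noncomputable def unifSphere (m : ℕ) : Measure (Sph m) :=
  ((volume : Measure (Euc m)).toSphere Set.univ)⁻¹ • (volume : Measure (Euc m)).toSphere

/-!
The Gaussian kernel has a positive feature expansion: on the sphere
`exp (-t ‖x - y‖²) = e^{-2t} exp (2t ⟪x, y⟫) = ∑ᵢ wᵢ φᵢ(x) φᵢ(y)` with coordinate monomials `φᵢ`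
and weights `wᵢ > 0`. Hence for measures `μ, ν`, with `I(μ, ν) = ∫∫ G_t dμ dν`,
`∑ᵢ wᵢ (∫ φᵢ dμ - ∫ φᵢ dν)² = I(μ, μ) - 2 I(μ, ν) + I(ν, ν)`.

By rotation invariance the potential `∫ G_t(x, y) dσ(y)` is a constant `C`. Moving one point of a
minimizer to any other position cannot lower the energy; averaging that position over `σ` bounds
the double sum `∑_{a,b} G_t(u_a, u_b)` by `N + N (N - 1) C`. With `μ = μ_N` and `ν = σ` the
identity above then gives `wᵢ (∫ φᵢ dμ_N - ∫ φᵢ dσ)² ≤ 1 / N`, so all moments converge.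
Integration against the `μ_N` is `1`-Lipschitz on `C(S^d, ℝ)`, so the set of test functions along
which the integrals converge is closed; it contains the polynomials, which are dense by
Stone–Weierstrass.
-/

section PairEnergy

open Finset

variable {X : Type*} {N : ℕ}

def pairEnergy (K : X → X → ℝ) (p : Fin N → X) : ℝ :=
  ∑ i, ∑ j, if i < j then K (p i) (p j) else 0

lemma sum_comp_update (f : X → ℝ) (p : Fin N → X) (j : Fin N) (v : X) :
    ∑ a, f (Function.update p j v a) = f v + ∑ a ∈ univ.erase j, f (p a) := by
  rw [← add_sum_erase _ _ (mem_univ j), Function.update_self]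
  congr 1
  exact sum_congr rfl fun a ha => by rw [Function.update_of_ne (ne_of_mem_erase ha)]

lemma sum_sum_comp_update (K : X → X → ℝ) (p : Fin N → X) (j : Fin N) (v : X) :
    ∑ a, ∑ b, K (Function.update p j v a) (Function.update p j v b) =
      K v v + ∑ b ∈ univ.erase j, K v (p b) + ∑ a ∈ univ.erase j, K (p a) v +
        ∑ a ∈ univ.erase j, ∑ b ∈ univ.erase j, K (p a) (p b) := by
  simp only [sum_comp_update (K _) p j v]
  rw [sum_comp_update (fun x => K x v + ∑ b ∈ univ.erase j, K x (p b)), sum_add_distrib]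
  ring

lemma sum_sum_eq_two_mul_pairEnergy_add (K : X → X → ℝ) (hK : ∀ x y, K x y = K y x)
    (p : Fin N → X) :
    ∑ a, ∑ b, K (p a) (p b) = 2 * pairEnergy K p + ∑ a, K (p a) (p a) := by
  have hsplit : ∀ a b, K (p a) (p b) = (if a < b then K (p a) (p b) else 0) +
      (if b < a then K (p b) (p a) else 0) + (if a = b then K (p a) (p b) else 0) := by
    intro a b
    rcases lt_trichotomy a b with h | rfl | h
    · simp [h, h.ne, h.not_gt]
    · simp
    · simp [h, h.ne', h.not_gt, hK (p a)]
  rw [sum_congr rfl fun a _ => sum_congr rfl fun b _ => hsplit a b]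
  simp only [sum_add_distrib, sum_ite_eq, mem_univ, if_true, pairEnergy]
  rw [sum_comm (f := fun a b => if b < a then K (p b) (p a) else 0)]
  ring

lemma two_mul_pairEnergy_update (K : X → X → ℝ) (hK : ∀ x y, K x y = K y x)
    (p : Fin N → X) (j : Fin N) (v : X) :
    2 * pairEnergy K (Function.update p j v) = 2 * ∑ b ∈ univ.erase j, K v (p b) +
      (∑ a ∈ univ.erase j, ∑ b ∈ univ.erase j, K (p a) (p b) -
        ∑ a ∈ univ.erase j, K (p a) (p a)) := by
  have h := sum_sum_eq_two_mul_pairEnergy_add K hK (Function.update p j v)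
  rw [sum_sum_comp_update, sum_comp_update (fun x => K x x)] at h
  simp only [hK _ v] at h
  linarith

lemma sum_erase_le_of_minimizes {K : X → X → ℝ} (hK : ∀ x y, K x y = K y x)
    {p : Fin N → X} (hp : ∀ q : Fin N → X, pairEnergy K p ≤ pairEnergy K q) (j : Fin N)
    (v : X) :
    ∑ b ∈ univ.erase j, K (p j) (p b) ≤ ∑ b ∈ univ.erase j, K v (p b) := by
  have h := hp (Function.update p j v)
  have hself := two_mul_pairEnergy_update K hK p j (p j)
  rw [Function.update_eq_self] at hself
  linarith [two_mul_pairEnergy_update K hK p j v]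


lemma sum_erase_le_pred_mul_of_minimizes [MeasurableSpace X] {σ : Measure X}
    [IsProbabilityMeasure σ] {K : X → X → ℝ} (hK : ∀ x y, K x y = K y x)
    (hint : ∀ x, Integrable (K x) σ) {C : ℝ}
    (hpot : ∀ x, ∫ y, K x y ∂σ = C) {p : Fin N → X}
    (hp : ∀ q : Fin N → X, pairEnergy K p ≤ pairEnergy K q) (a : Fin N) :
    ∑ b ∈ univ.erase a, K (p a) (p b) ≤ ((N : ℝ) - 1) * C := by
  have hsym : ∀ b, (fun v => K v (p b)) = K (p b) := fun b => funext fun v => hK v (p b)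
  calc ∑ b ∈ univ.erase a, K (p a) (p b)
      = ∫ _, ∑ b ∈ univ.erase a, K (p a) (p b) ∂σ := by simp
    _ ≤ ∫ v, ∑ b ∈ univ.erase a, K v (p b) ∂σ :=
        integral_mono (integrable_const _)
          (integrable_finsetSum _ fun b _ => hsym b ▸ hint (p b))
          fun v => sum_erase_le_of_minimizes hK hp a v
    _ = ((N : ℝ) - 1) * C := by
        rw [integral_finsetSum _ fun b _ => hsym b ▸ hint (p b)]
        simp only [hsym, hpot, sum_const, card_erase_of_mem (mem_univ a), card_univ,
          Fintype.card_fin, nsmul_eq_mul, Nat.cast_pred a.pos]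

lemma sum_sum_le_of_minimizes [MeasurableSpace X] {σ : Measure X} [IsProbabilityMeasure σ]
    {K : X → X → ℝ} (hK : ∀ x y, K x y = K y x) (hint : ∀ x, Integrable (K x) σ) {C : ℝ}
    (hpot : ∀ x, ∫ y, K x y ∂σ = C) {p : Fin N → X}
    (hp : ∀ q : Fin N → X, pairEnergy K p ≤ pairEnergy K q) :
    ∑ a, ∑ b, K (p a) (p b) ≤ ∑ a, K (p a) (p a) + N * (((N : ℝ) - 1) * C) := by
  calc ∑ a, ∑ b, K (p a) (p b) = ∑ a, (K (p a) (p a) + ∑ b ∈ univ.erase a, K (p a) (p b)) :=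
        sum_congr rfl fun a _ => (add_sum_erase _ _ (mem_univ a)).symm
    _ ≤ ∑ a, (K (p a) (p a) + ((N : ℝ) - 1) * C) :=
        sum_le_sum fun a _ =>
          add_le_add_right (sum_erase_le_pred_mul_of_minimizes hK hint hpot hp a) _
    _ = _ := by simp [sum_add_distrib]

end PairEnergy

section FeatureExpansion

variable {X ι : Type*}

lemma abs_integral_le_measureReal_univ [MeasurableSpace X] {μ : Measure X} [IsFiniteMeasure μ]
    {f : X → ℝ} (hf : ∀ x, |f x| ≤ 1) : |∫ x, f x ∂μ| ≤ μ.real Set.univ := by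
  simpa using norm_integral_le_of_norm_le_const (μ := μ) (C := 1)
    (.of_forall fun x => (Real.norm_eq_abs _).trans_le (hf x))

lemma integral_tsum_const_mul [MeasurableSpace X] [Countable ι] {μ : Measure X}
    [IsFiniteMeasure μ] {c : ι → ℝ} (hc : Summable c) {f : ι → X → ℝ}
    (hf : ∀ i, Measurable (f i)) (hb : ∀ i x, |f i x| ≤ 1) :
    ∫ x, ∑' i, c i * f i x ∂μ = ∑' i, c i * ∫ x, f i x ∂μ := by
  have hbound : ∀ i x, ‖c i * f i x‖ ≤ |c i| := fun i x => by
    simpa [abs_mul] using mul_le_mul_of_nonneg_left (hb i x) (abs_nonneg (c i))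
  rw [← integral_tsum_of_summable_integral_norm
    (fun i => Integrable.of_bound ((hf i).const_mul _).aestronglyMeasurable _
      (.of_forall (hbound i)))]
  · simp_rw [integral_const_mul]
  · refine ((summable_abs_iff.mpr hc).mul_right (μ.real Set.univ)).of_nonneg_of_le
      (fun i => integral_nonneg fun x => norm_nonneg _) fun i => ?_
    calc ∫ x, ‖c i * f i x‖ ∂μ ≤ ∫ _, |c i| ∂μ :=
          integral_mono_of_nonneg (.of_forall fun _ => norm_nonneg _) (integrable_const _)
            (.of_forall (hbound i))
      _ = |c i| * μ.real Set.univ := by simp [mul_comm]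

lemma summable_mul_of_abs_le {w g : ι → ℝ} (hw : ∀ i, 0 ≤ w i) (hws : Summable w) {B : ℝ}
    (hg : ∀ i, |g i| ≤ B) : Summable fun i => w i * g i :=
  (hws.mul_right B).of_norm_bounded fun i => by
    rw [Real.norm_eq_abs, abs_mul, abs_of_nonneg (hw i)]
    exact mul_le_mul_of_nonneg_left (hg i) (hw i)

structure HasFeatureExpansion (K : X → X → ℝ) (w : ι → ℝ) (φ : ι → X → ℝ) : Prop where
  weight_nonneg : ∀ i, 0 ≤ w i
  summable_weight : Summable w
  abs_feature_le_one : ∀ i x, |φ i x| ≤ 1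
  eq_tsum : ∀ x y, K x y = ∑' i, w i * φ i x * φ i y

namespace HasFeatureExpansion

variable {K : X → X → ℝ} {w : ι → ℝ} {φ : ι → X → ℝ}

lemma symm (hK : HasFeatureExpansion K w φ) (x y : X) : K x y = K y x := by
  simp only [hK.eq_tsum, mul_right_comm]

variable [MeasurableSpace X]

lemma integral_eq_tsum [Countable ι] (hK : HasFeatureExpansion K w φ)
    (hφ : ∀ i, Measurable (φ i)) (ν : Measure X) [IsFiniteMeasure ν] (x : X) :
    ∫ y, K x y ∂ν = ∑' i, w i * φ i x * ∫ y, φ i y ∂ν := by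
  simp only [hK.eq_tsum]
  exact integral_tsum_const_mul (summable_mul_of_abs_le hK.weight_nonneg hK.summable_weight
    (hK.abs_feature_le_one · x)) hφ hK.abs_feature_le_one

lemma integral_integral_eq_tsum [Countable ι] (hK : HasFeatureExpansion K w φ)
    (hφ : ∀ i, Measurable (φ i)) (μ ν : Measure X) [IsFiniteMeasure μ] [IsFiniteMeasure ν] :
    ∫ x, ∫ y, K x y ∂ν ∂μ = ∑' i, w i * (∫ x, φ i x ∂μ) * ∫ y, φ i y ∂ν := by
  simp only [hK.integral_eq_tsum hφ, mul_right_comm _ (φ _ _)]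
  rw [integral_tsum_const_mul (summable_mul_of_abs_le hK.weight_nonneg hK.summable_weight fun i =>
    abs_integral_le_measureReal_univ (μ := ν) (hK.abs_feature_le_one i)) hφ hK.abs_feature_le_one]
  simp only [mul_right_comm]

lemma summable_mul_integral_mul_integral (hK : HasFeatureExpansion K w φ) (μ ν : Measure X)
    [IsFiniteMeasure μ] [IsFiniteMeasure ν] :
    Summable fun i => w i * (∫ x, φ i x ∂μ) * ∫ y, φ i y ∂ν := by
  simp only [mul_assoc]
  refine summable_mul_of_abs_le hK.weight_nonneg hK.summable_weight
    (B := μ.real Set.univ * ν.real Set.univ) fun i => ?_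
  rw [abs_mul]
  exact mul_le_mul (abs_integral_le_measureReal_univ (hK.abs_feature_le_one i))
    (abs_integral_le_measureReal_univ (hK.abs_feature_le_one i)) (abs_nonneg _)
    measureReal_nonneg

lemma hasSum_mul_sq_integral_sub [Countable ι] (hK : HasFeatureExpansion K w φ)
    (hφ : ∀ i, Measurable (φ i)) (μ ν : Measure X) [IsFiniteMeasure μ] [IsFiniteMeasure ν] :
    HasSum (fun i => w i * (∫ x, φ i x ∂μ - ∫ x, φ i x ∂ν) ^ 2)
      (∫ x, ∫ y, K x y ∂μ ∂μ - 2 * ∫ x, ∫ y, K x y ∂ν ∂μ + ∫ x, ∫ y, K x y ∂ν ∂ν) := by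
  have h := ((hK.summable_mul_integral_mul_integral μ μ).hasSum.sub
    ((hK.summable_mul_integral_mul_integral μ ν).hasSum.mul_left 2)).add
      (hK.summable_mul_integral_mul_integral ν ν).hasSum
  simp only [← hK.integral_integral_eq_tsum hφ] at h
  exact h.congr_fun fun i => by ring

end HasFeatureExpansion

end FeatureExpansion

section EmpiricalMeasure

variable {X : Type*} [MeasurableSpace X] {N : ℕ}

/-- For `N = 0` this is `∞ • 0 = 0`. -/
def empiricalMeasure (p : Fin N → X) : Measure X :=
  (N : ℝ≥0∞)⁻¹ • ∑ i, Measure.dirac (p i)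

lemma empiricalMeasure_univ_le_one (p : Fin N → X) : empiricalMeasure p Set.univ ≤ 1 := by
  simp [empiricalMeasure, ENNReal.inv_mul_le_one]

instance (p : Fin N → X) : IsFiniteMeasure (empiricalMeasure p) :=
  ⟨(empiricalMeasure_univ_le_one p).trans_lt ENNReal.one_lt_top⟩

lemma integral_empiricalMeasure [MeasurableSingletonClass X] (p : Fin N → X) (f : X → ℝ) :
    ∫ x, f x ∂(empiricalMeasure p) = (N : ℝ)⁻¹ * ∑ i, f (p i) := by
  rw [empiricalMeasure, integral_smul_measure,
    integral_finsetSum_measure fun i _ => integrable_dirac (by simp)]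
  simp [integral_dirac]

end EmpiricalMeasure

section Minimizers

variable {X ι : Type*} [MeasurableSpace X] [MeasurableSingletonClass X] [Countable ι]
  {K : X → X → ℝ} {w : ι → ℝ} {φ : ι → X → ℝ} {σ : Measure X} [IsProbabilityMeasure σ]
  {C κ : ℝ}

lemma mul_sq_integral_sub_le_of_minimizes (hK : HasFeatureExpansion K w φ)
    (hφ : ∀ i, Measurable (φ i)) (hint : ∀ x, Integrable (K x) σ)
    (hpot : ∀ x, ∫ y, K x y ∂σ = C) (hdiag : ∀ x, K x x ≤ κ) {N : ℕ} (hN : 0 < N)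
    {p : Fin N → X} (hp : ∀ q : Fin N → X, pairEnergy K p ≤ pairEnergy K q) (i : ι) :
    w i * (∫ x, φ i x ∂(empiricalMeasure p) - ∫ x, φ i x ∂σ) ^ 2 ≤ κ / N := by
  have hN' : (0 : ℝ) < N := Nat.cast_pos.mpr hN
  have hμμ : ∫ x, ∫ y, K x y ∂(empiricalMeasure p) ∂(empiricalMeasure p) =
      (N : ℝ)⁻¹ * (N : ℝ)⁻¹ * ∑ a, ∑ b, K (p a) (p b) := by
    simp only [integral_empiricalMeasure, Finset.mul_sum, mul_assoc]
  have hμσ : ∫ x, ∫ y, K x y ∂σ ∂(empiricalMeasure p) = C := by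
    simp only [hpot, integral_empiricalMeasure, Finset.sum_const, Finset.card_univ,
      Fintype.card_fin, nsmul_eq_mul]
    field_simp
  have hσσ : ∫ x, ∫ y, K x y ∂σ ∂σ = C := by simp [hpot]
  have hC : 0 ≤ C := by
    rw [← hσσ, hK.integral_integral_eq_tsum hφ]
    exact tsum_nonneg fun j => by
      simpa only [mul_assoc, ← sq] using mul_nonneg (hK.weight_nonneg j) (sq_nonneg _)
  have hT : ∑ a, ∑ b, K (p a) (p b) ≤ N * κ + N * (((N : ℝ) - 1) * C) := by
    refine (sum_sum_le_of_minimizes hK.symm hint hpot hp).trans (add_le_add_left ?_ _)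
    simpa using Finset.sum_le_sum fun a (_ : a ∈ Finset.univ) => hdiag (p a)
  calc w i * (∫ x, φ i x ∂(empiricalMeasure p) - ∫ x, φ i x ∂σ) ^ 2
      ≤ ∫ x, ∫ y, K x y ∂(empiricalMeasure p) ∂(empiricalMeasure p) -
          2 * ∫ x, ∫ y, K x y ∂σ ∂(empiricalMeasure p) + ∫ x, ∫ y, K x y ∂σ ∂σ :=
        le_hasSum (hK.hasSum_mul_sq_integral_sub hφ _ σ) i fun j _ =>
          mul_nonneg (hK.weight_nonneg j) (sq_nonneg _)
    _ ≤ (N : ℝ)⁻¹ * (N : ℝ)⁻¹ * (N * κ + N * (((N : ℝ) - 1) * C)) - C := by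
        rw [hμμ, hμσ, hσσ]
        have hNN : (0 : ℝ) ≤ (N : ℝ)⁻¹ * (N : ℝ)⁻¹ := by positivity
        linarith [mul_le_mul_of_nonneg_left hT hNN]
    _ = κ / N - C / N := by field_simp; ring
    _ ≤ κ / N := by linarith [div_nonneg hC hN'.le]


lemma tendsto_integral_feature_of_minimizes (hK : HasFeatureExpansion K w φ)
    (hφ : ∀ i, Measurable (φ i)) (hint : ∀ x, Integrable (K x) σ)
    (hpot : ∀ x, ∫ y, K x y ∂σ = C) (hdiag : ∀ x, K x x ≤ κ) (u : (N : ℕ) → Fin N → X)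
    (hu : ∀ N, 1 ≤ N → ∀ q : Fin N → X, pairEnergy K (u N) ≤ pairEnergy K q) {i : ι}
    (hwi : 0 < w i) :
    Tendsto (fun N => ∫ x, φ i x ∂(empiricalMeasure (u N))) atTop (𝓝 (∫ x, φ i x ∂σ)) := by
  have hsq : Tendsto (fun N => (∫ x, φ i x ∂(empiricalMeasure (u N)) - ∫ x, φ i x ∂σ) ^ 2)
      atTop (𝓝 0) := by
    refine squeeze_zero' (.of_forall fun N => sq_nonneg _) ?_
      (tendsto_const_div_atTop_nhds_zero_nat (κ / w i))
    filter_upwards [eventually_ge_atTop 1] with N hN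
    rw [div_right_comm, le_div_iff₀' hwi]
    exact mul_sq_integral_sub_le_of_minimizes hK hφ hint hpot hdiag hN (hu N hN) i
  rw [tendsto_iff_norm_sub_tendsto_zero]
  simpa [Real.sqrt_sq_eq_abs] using hsq.sqrt

end Minimizers

section WeakConvergence

variable {X : Type*} [TopologicalSpace X] [CompactSpace X] [MeasurableSpace X]
  [OpensMeasurableSpace X]

lemma ContinuousMap.integrable_of_compactSpace (μ : Measure X) [IsFiniteMeasure μ]
    (g : C(X, ℝ)) : Integrable g μ :=
  (BoundedContinuousFunction.mkOfCompact g).integrable μ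

lemma lipschitzWith_integral_continuousMap (μ : Measure X) [IsFiniteMeasure μ] :
    LipschitzWith (μ Set.univ).toNNReal fun g : C(X, ℝ) => ∫ x, g x ∂μ := by
  refine LipschitzWith.of_dist_le_mul fun g g' => ?_
  rw [Real.dist_eq, ← integral_sub (g.integrable_of_compactSpace μ)
    (g'.integrable_of_compactSpace μ), ENNReal.coe_toNNReal_eq_toReal, ← measureReal_def,
    mul_comm]
  exact norm_integral_le_of_norm_le_const (f := fun x => g x - g' x)
    (.of_forall fun x => (dist_eq_norm _ _).symm.trans_le (ContinuousMap.dist_apply_le_dist x))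

lemma tendsto_integral_of_forall_mem_submonoidClosure {ι : Type*} {l : Filter ι}
    {μ : ι → Measure X} (hμ : ∀ n, μ n Set.univ ≤ 1) {ν : Measure X} [IsFiniteMeasure ν]
    {s : Set C(X, ℝ)} (hs : (Algebra.adjoin ℝ s).SeparatesPoints)
    (h : ∀ g ∈ Submonoid.closure s,
      Tendsto (fun n => ∫ x, g x ∂(μ n)) l (𝓝 (∫ x, g x ∂ν))) (g : C(X, ℝ)) :
    Tendsto (fun n => ∫ x, g x ∂(μ n)) l (𝓝 (∫ x, g x ∂ν)) := by
  have : ∀ n, IsFiniteMeasure (μ n) := fun n => ⟨(hμ n).trans_lt ENNReal.one_lt_top⟩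
  have hclosed : IsClosed {g : C(X, ℝ) | Tendsto (fun n => ∫ x, g x ∂(μ n)) l
      (𝓝 (∫ x, g x ∂ν))} := by
    refine Equicontinuous.isClosed_setOfPred_tendsto ?_
      (lipschitzWith_integral_continuousMap ν).continuous
    refine (LipschitzWith.uniformEquicontinuous _ 1 fun n =>
      (lipschitzWith_integral_continuousMap (μ n)).weaken ?_).equicontinuous
    simpa using ENNReal.toNNReal_mono ENNReal.one_ne_top (hμ n)
  have hspan : ∀ g ∈ Submodule.span ℝ (Submonoid.closure s : Set C(X, ℝ)),
      Tendsto (fun n => ∫ x, g x ∂(μ n)) l (𝓝 (∫ x, g x ∂ν)) := by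
    intro g hg
    induction hg using Submodule.span_induction with
    | mem g hg => exact h g hg
    | zero => simpa using tendsto_const_nhds
    | add g g' _ _ hg hg' =>
      simp only [ContinuousMap.add_apply]
      rw [integral_add (g.integrable_of_compactSpace ν) (g'.integrable_of_compactSpace ν)]
      refine (hg.add hg').congr fun n => ?_
      rw [integral_add (g.integrable_of_compactSpace _) (g'.integrable_of_compactSpace _)]
    | smul c g _ hg => simpa [integral_const_mul] using hg.const_mul c
  have hdense : closure (Algebra.adjoin ℝ s : Set C(X, ℝ)) = Set.univ := by
    rw [← Subalgebra.topologicalClosure_coe,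
      ContinuousMap.subalgebra_topologicalClosure_eq_top_of_separatesPoints _ hs]
    rfl
  refine hclosed.closure_subset_iff.mpr (fun g hg => hspan g ?_) (hdense ▸ Set.mem_univ g)
  rwa [← Algebra.adjoin_eq_span]

end WeakConvergence

section GaussianKernel

variable {m : ℕ}

/-- `⟨n, k⟩` indexes the monomial `x (k 0) * ⋯ * x (k (n - 1))`; every monomial occurs once per
ordering of its factors, so `⟪x, y⟫ ^ n` expands without multinomial coefficients. -/
abbrev MonomialIndex (m : ℕ) : Type := Σ n : ℕ, Fin n → Fin m

def coordMonomial (i : MonomialIndex m) (x : Euc m) : ℝ := ∏ j, x (i.2 j)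

def gaussWeight (t : ℝ) (i : MonomialIndex m) : ℝ :=
  rexp (-(2 * t)) * (2 * t) ^ i.1 / i.1.factorial

lemma continuous_coordMonomial (i : MonomialIndex m) : Continuous (coordMonomial i) :=
  continuous_finsetProd _ fun j _ => (EuclideanSpace.proj (i.2 j)).continuous

lemma abs_coordMonomial_le_one (i : MonomialIndex m) {x : Euc m} (hx : ‖x‖ ≤ 1) :
    |coordMonomial i x| ≤ 1 := by
  rw [coordMonomial, Finset.abs_prod]
  exact Finset.prod_le_one (fun _ _ => abs_nonneg _)
    fun j _ => (PiLp.norm_apply_le x (i.2 j)).trans hx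

lemma inner_pow_eq_sum_coordMonomial (x y : Euc m) (n : ℕ) :
    ⟪x, y⟫ ^ n = ∑ k : Fin n → Fin m, coordMonomial ⟨n, k⟩ x * coordMonomial ⟨n, k⟩ y := by
  simp only [PiLp.inner_apply, RCLike.inner_apply, conj_trivial, Fintype.sum_pow, coordMonomial,
    ← Finset.prod_mul_distrib, mul_comm]

lemma gaussWeight_nonneg {t : ℝ} (ht : 0 ≤ t) (i : MonomialIndex m) : 0 ≤ gaussWeight t i := by
  unfold gaussWeight
  positivity

lemma gaussWeight_pos {t : ℝ} (ht : 0 < t) (i : MonomialIndex m) : 0 < gaussWeight t i := by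
  unfold gaussWeight
  positivity

lemma summable_gaussWeight {t : ℝ} (ht : 0 ≤ t) : Summable (gaussWeight (m := m) t) := by
  refine (summable_sigma_of_nonneg (gaussWeight_nonneg ht)).mpr
    ⟨fun n => (hasSum_fintype _).summable, ?_⟩
  have hfiber : ∀ n : ℕ, ∑' k : Fin n → Fin m, gaussWeight t ⟨n, k⟩ =
      rexp (-(2 * t)) * ((2 * t * m) ^ n / n.factorial) := fun n => by
    simp only [tsum_fintype, gaussWeight, Finset.sum_const, Finset.card_univ, Fintype.card_fun,
      Fintype.card_fin, nsmul_eq_mul]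
    push_cast
    ring
  simpa only [hfiber] using (Real.summable_pow_div_factorial (2 * t * m)).mul_left _

def gaussKernel (t : ℝ) (x y : Sph m) : ℝ := rexp (-t * ‖(x : Euc m) - y‖ ^ 2)

lemma continuous_gaussKernel (t : ℝ) (x : Sph m) : Continuous (gaussKernel t x) := by
  unfold gaussKernel
  fun_prop

lemma gaussKernel_self (t : ℝ) (x : Sph m) : gaussKernel t x x = 1 := by
  simp [gaussKernel]

lemma gaussKernel_eq_exp_inner (t : ℝ) (x y : Sph m) :
    gaussKernel t x y = rexp (-(2 * t)) * rexp (2 * t * ⟪(x : Euc m), y⟫) := by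
  rw [gaussKernel, ← Real.exp_add, norm_sub_sq_real, norm_eq_of_mem_sphere x,
    norm_eq_of_mem_sphere y]
  ring_nf

lemma hasFeatureExpansion_gaussKernel {t : ℝ} (ht : 0 ≤ t) :
    HasFeatureExpansion (gaussKernel (m := m) t) (gaussWeight t)
      fun i (x : Sph m) => coordMonomial i (x : Euc m) where
  weight_nonneg := gaussWeight_nonneg ht
  summable_weight := summable_gaussWeight ht
  abs_feature_le_one i x := abs_coordMonomial_le_one i (norm_eq_of_mem_sphere x).le
  eq_tsum x y := by
    have hsummable : Summable fun i : MonomialIndex m =>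
        gaussWeight t i * coordMonomial i x * coordMonomial i y := by
      simp only [mul_assoc]
      refine summable_mul_of_abs_le (gaussWeight_nonneg ht) (summable_gaussWeight ht) (B := 1)
        fun i => ?_
      rw [abs_mul]
      exact mul_le_one₀ (abs_coordMonomial_le_one i (norm_eq_of_mem_sphere x).le) (abs_nonneg _)
        (abs_coordMonomial_le_one i (norm_eq_of_mem_sphere y).le)
    refine (HasSum.sigma_of_hasSum ?_ (fun n => hasSum_fintype _) hsummable).tsum_eq.symm
    have hexp := NormedSpace.expSeries_div_hasSum_exp (2 * t * ⟪(x : Euc m), y⟫)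
    rw [← Real.exp_eq_exp_ℝ] at hexp
    rw [gaussKernel_eq_exp_inner]
    refine (hexp.mul_left (rexp (-(2 * t)))).congr_fun fun n => ?_
    rw [mul_pow, inner_pow_eq_sum_coordMonomial, Finset.mul_sum, Finset.sum_div, Finset.mul_sum]
    refine Finset.sum_congr rfl fun k _ => ?_
    rw [gaussWeight]
    ring

end GaussianKernel

section RotationInvariance

variable {m : ℕ}

open scoped Pointwise

def sphereMap (e : Euc m ≃ₗᵢ[ℝ] Euc m) (x : Sph m) : Sph m :=
  ⟨e x, by simp [norm_eq_of_mem_sphere x]⟩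

lemma continuous_sphereMap (e : Euc m ≃ₗᵢ[ℝ] Euc m) : Continuous (sphereMap e) :=
  (e.continuous.comp continuous_subtype_val).subtype_mk _

lemma map_sphereMap_toSphere (e : Euc m ≃ₗᵢ[ℝ] Euc m) :
    (volume : Measure (Euc m)).toSphere.map (sphereMap e) =
      (volume : Measure (Euc m)).toSphere := by
  ext s hs
  have hs' := (continuous_sphereMap e).measurable hs
  rw [Measure.map_apply (continuous_sphereMap e).measurable hs, Measure.toSphere_apply' _ hs',
    Measure.toSphere_apply' _ hs]
  have hcone : Set.Ioo (0 : ℝ) 1 • ((↑) '' (sphereMap e ⁻¹' s) : Set (Euc m)) =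
      e ⁻¹' (Set.Ioo (0 : ℝ) 1 • ((↑) '' s)) := by
    ext z
    simp only [Set.mem_smul, Set.mem_image, Set.mem_preimage]
    constructor
    · rintro ⟨r, hr, _, ⟨x, hx, rfl⟩, rfl⟩
      exact ⟨r, hr, _, ⟨_, hx, rfl⟩, (e.map_smul r x).symm⟩
    · rintro ⟨r, hr, _, ⟨x, hx, rfl⟩, hz⟩
      refine ⟨r, hr, _, ⟨sphereMap e.symm x, ?_, rfl⟩, ?_⟩
      · convert hx
        exact Subtype.ext (e.apply_symm_apply x)
      · change r • e.symm (x : Euc m) = z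
        rw [← e.symm.map_smul, hz, e.symm_apply_apply]
  rw [hcone, e.measurePreserving.measure_preimage_emb e.toHomeomorph.measurableEmbedding]

lemma map_sphereMap_unifSphere (e : Euc m ≃ₗᵢ[ℝ] Euc m) :
    (unifSphere m).map (sphereMap e) = unifSphere m := by
  rw [unifSphere, Measure.map_smul, map_sphereMap_toSphere]

lemma integral_gaussKernel_eq (t : ℝ) (x y : Sph m) :
    ∫ z, gaussKernel t x z ∂(unifSphere m) = ∫ z, gaussKernel t y z ∂(unifSphere m) := by
  set e := (ℝ ∙ ((x : Euc m) - y))ᗮ.reflection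
  have hxy : e x = y :=
    Submodule.reflection_sub (by rw [norm_eq_of_mem_sphere x, norm_eq_of_mem_sphere y])
  have hK : ∀ z, gaussKernel t y (sphereMap e z) = gaussKernel t x z := fun z => by
    simp only [gaussKernel, sphereMap, ← hxy, ← e.map_sub, e.norm_map]
  calc ∫ z, gaussKernel t x z ∂(unifSphere m)
      = ∫ z, gaussKernel t y (sphereMap e z) ∂(unifSphere m) := by simp only [hK]
    _ = ∫ z, gaussKernel t y z ∂((unifSphere m).map (sphereMap e)) :=
        (integral_map (continuous_sphereMap e).aemeasurable
          (continuous_gaussKernel t y).aestronglyMeasurable).symm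
    _ = ∫ z, gaussKernel t y z ∂(unifSphere m) := by rw [map_sphereMap_unifSphere]

end RotationInvariance

section Sphere

variable {m : ℕ}

instance [NeZero m] : IsProbabilityMeasure (unifSphere m) := by
  constructor
  rw [unifSphere, Measure.smul_apply, smul_eq_mul, ENNReal.inv_mul_cancel
    (Measure.measure_univ_ne_zero.mpr (Measure.toSphere_ne_zero _)) (measure_ne_top _ _)]

def sphereCoord (k : Fin m) : C(Sph m, ℝ) :=
  ⟨fun x => (x : Euc m) k, (EuclideanSpace.proj k).continuous.comp continuous_subtype_val⟩

lemma separatesPoints_adjoin_sphereCoord :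
    (Algebra.adjoin ℝ (Set.range (sphereCoord (m := m)))).SeparatesPoints := by
  intro x y hxy
  obtain ⟨k, hk⟩ : ∃ k, (x : Euc m) k ≠ (y : Euc m) k := by
    by_contra! h
    exact hxy (Subtype.ext (PiLp.ext h))
  exact ⟨sphereCoord k, ⟨sphereCoord k, Algebra.subset_adjoin (Set.mem_range_self k), rfl⟩, hk⟩

lemma exists_eq_coordMonomial_of_mem_closure {g : C(Sph m, ℝ)}
    (hg : g ∈ Submonoid.closure (Set.range (sphereCoord (m := m)))) :
    ∃ i : MonomialIndex m, ∀ x, g x = coordMonomial i x := by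
  induction hg using Submonoid.closure_induction with
  | mem g hg =>
    obtain ⟨k, rfl⟩ := hg
    exact ⟨⟨1, fun _ => k⟩, fun x => by simp [coordMonomial]; rfl⟩
  | one => exact ⟨⟨0, Fin.elim0⟩, fun x => by simp [coordMonomial]⟩
  | mul g g' _ _ hg hg' =>
    obtain ⟨⟨n, k⟩, hk⟩ := hg
    obtain ⟨⟨n', k'⟩, hk'⟩ := hg'
    refine ⟨⟨n + n', Fin.append k k'⟩, fun x => ?_⟩
    simp [hk, hk', coordMonomial, Fin.prod_univ_add]

lemma tendsto_integral_coordMonomial_of_minimizes [NeZero m] {t : ℝ} (ht : 0 < t)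
    (u : (N : ℕ) → Fin N → Sph m)
    (hu : ∀ N, 1 ≤ N → ∀ q : Fin N → Sph m,
      pairEnergy (gaussKernel t) (u N) ≤ pairEnergy (gaussKernel t) q)
    (i : MonomialIndex m) :
    Tendsto (fun N => ∫ x, coordMonomial i x ∂(empiricalMeasure (u N))) atTop
      (𝓝 (∫ x, coordMonomial i x ∂(unifSphere m))) := by
  have hpot : ∀ x, ∫ y, gaussKernel t x y ∂(unifSphere m) =
      ∫ x', ∫ y, gaussKernel t x' y ∂(unifSphere m) ∂(unifSphere m) := fun x => by
    simp_rw [integral_gaussKernel_eq t _ x]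
    simp
  exact tendsto_integral_feature_of_minimizes (hasFeatureExpansion_gaussKernel ht.le)
    (fun i => ((continuous_coordMonomial i).comp continuous_subtype_val).measurable)
    (fun x => ContinuousMap.integrable_of_compactSpace _ ⟨_, continuous_gaussKernel t x⟩) hpot
    (fun x => (gaussKernel_self t x).le) u hu (gaussWeight_pos ht i)

end Sphere

theorem minimizing_configurations_tendsto_uniform_general (d : ℕ) (t : ℝ) (ht : 0 < t)
    (u : (N : ℕ) → Fin N → Sph (d + 1))
    (hmin : ∀ N : ℕ, 1 ≤ N → ∀ v : Fin N → Sph (d + 1),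
      (∑ i : Fin N, ∑ j : Fin N, if i < j then
          Real.exp (-t * ‖(u N i : Euc (d + 1)) - (u N j : Euc (d + 1))‖ ^ 2) else 0) ≤
        ∑ i : Fin N, ∑ j : Fin N, if i < j then
          Real.exp (-t * ‖(v i : Euc (d + 1)) - (v j : Euc (d + 1))‖ ^ 2) else 0) :
    ∀ h : Sph (d + 1) → ℝ, Continuous h →
      Tendsto (fun N : ℕ =>
          ∫ x, h x ∂(((N : ℝ≥0∞))⁻¹ • ∑ i : Fin N, Measure.dirac (u N i)))
        atTop (𝓝 (∫ x, h x ∂(unifSphere (d + 1)))) := by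
  intro h hc
  refine tendsto_integral_of_forall_mem_submonoidClosure
    (fun N => empiricalMeasure_univ_le_one (u N)) separatesPoints_adjoin_sphereCoord
    (fun g hg => ?_) ⟨h, hc⟩
  obtain ⟨i, hi⟩ := exists_eq_coordMonomial_of_mem_closure hg
  simpa only [hi] using tendsto_integral_coordMonomial_of_minimizes ht u hmin i

/-- For `d ≥ 1`, `t > 0`, if for each `N ≥ 1` the configuration `u N` minimizes
the pairwise Gaussian potential `Σ_{i<j} G_t(u_i,u_j)` over all `N`-point configurations on `S^d`,
then the normalized counting measures of `u N` converge weak* to `σ_d` as `N → ∞`. -/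
theorem minimizing_configurations_tendsto_uniform (d : ℕ) (hd : 1 ≤ d) (t : ℝ) (ht : 0 < t)
    (u : (N : ℕ) → Fin N → Sph (d + 1))
    (hmin : ∀ N : ℕ, 1 ≤ N → ∀ v : Fin N → Sph (d + 1),
      (∑ i : Fin N, ∑ j : Fin N, if i < j then
          Real.exp (-t * ‖(u N i : Euc (d + 1)) - (u N j : Euc (d + 1))‖ ^ 2) else 0) ≤
        ∑ i : Fin N, ∑ j : Fin N, if i < j then
          Real.exp (-t * ‖(v i : Euc (d + 1)) - (v j : Euc (d + 1))‖ ^ 2) else 0) :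
    ∀ h : Sph (d + 1) → ℝ, Continuous h →
      Tendsto (fun N : ℕ =>
          ∫ x, h x ∂(((N : ℝ≥0∞))⁻¹ • ∑ i : Fin N, Measure.dirac (u N i)))
        atTop (𝓝 (∫ x, h x ∂(unifSphere (d + 1)))) :=
  minimizing_configurations_tendsto_uniform_general d t ht u hmin
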